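/- Let R be an n×m complex matrix with m ≥ n whose rows are unit vectors in the Euclidean norm, D = diag(σ₁,…,σ_n) with σ_i ≥ 0, and B(k) the n×n cyclic column submatrices of R. Then Σ_{k=1}^m ‖D B(k) D‖_* ≥ (1/n)(Σ_k σ_k)². -/

import Mathlib

/-!
The nuclear norm dominates the Frobenius norm (the square root of the sum of the eigenvalues of
`MᴴM` is at most the sum of their square roots), and by Cauchy–Schwarz the Frobenius norm of an
`n × n` matrix dominates `1/n` times its entrywise `ℓ¹` norm. As `k` runs over the `m` cyclic
windows, the `(i, j)` entry of `B(k)` runs through row `i` of `R` exactly once, so the entrywise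
`ℓ¹` norms of `D B(k) D` add up to `(∑ᵢ |σᵢ| ‖Rᵢ‖₁) (∑ⱼ |σⱼ|)`, which is at least `(∑ᵢ σᵢ)²`
because a unit vector has `ℓ¹` norm at least `1`.
-/

open Matrix Finset

/-- The nuclear (Schatten-1, trace) norm: the sum of the singular values. -/
noncomputable def nuclearNorm {n m : ℕ} (A : Matrix (Fin n) (Fin m) ℂ) : ℝ :=
  ∑ j, Real.sqrt ((Matrix.isHermitian_conjTranspose_mul_self A).eigenvalues j)

/-- The `n×n` submatrix of an `n×m` matrix `R` formed by `n` cyclically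
consecutive columns starting after column `k` (indices mod `m`). -/
def cycSub {n m : ℕ} (R : Matrix (Fin n) (Fin m) ℂ) (k : Fin m) :
    Matrix (Fin n) (Fin n) ℂ :=
  Matrix.of fun i j => R i ⟨(j.val + k.val) % m, Nat.mod_lt _ k.pos⟩

theorem Real.sqrt_sum_le_sum_sqrt {ι : Type*} (s : Finset ι) {f : ι → ℝ}
    (hf : ∀ i ∈ s, 0 ≤ f i) : √(∑ i ∈ s, f i) ≤ ∑ i ∈ s, √(f i) := by
  rw [Real.sqrt_le_left (sum_nonneg fun i _ => Real.sqrt_nonneg _)]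
  calc ∑ i ∈ s, f i = ∑ i ∈ s, √(f i) ^ 2 :=
        sum_congr rfl fun i hi => (Real.sq_sqrt (hf i hi)).symm
    _ ≤ _ := sum_sq_le_sq_sum_of_nonneg fun i _ => Real.sqrt_nonneg _

theorem one_le_sum_norm_of_sum_sq_norm_eq_one {ι 𝕜 : Type*} [Fintype ι] [NormedField 𝕜]
    {x : ι → 𝕜} (hx : ∑ t, ‖x t‖ ^ 2 = 1) : 1 ≤ ∑ t, ‖x t‖ := by
  have hsq := sum_sq_le_sq_sum_of_nonneg (s := univ) fun t _ => norm_nonneg (x t)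
  rw [hx] at hsq
  exact (one_le_sq_iff₀ (sum_nonneg fun t _ => norm_nonneg _)).mp hsq

theorem Fin.sum_mod_add_shift {M : Type*} [AddCommMonoid M] {m : ℕ} (j : ℕ) (f : Fin m → M) :
    ∑ k : Fin m, f ⟨(j + k) % m, Nat.mod_lt _ k.pos⟩ = ∑ t, f t := by
  rcases m with _ | m
  · simp
  calc ∑ k : Fin (m + 1), f ⟨(j + k) % (m + 1), Nat.mod_lt _ k.pos⟩
      = ∑ k, f (Fin.ofNat (m + 1) j + k) := by
        refine sum_congr rfl fun k _ => congrArg f (Fin.ext ?_)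
        simp [Fin.val_add]
    _ = ∑ t, f t := Equiv.sum_comp (Equiv.addLeft (Fin.ofNat (m + 1) j)) f

namespace Matrix

variable {𝕜 m n : Type*} [RCLike 𝕜] [Fintype m] [Fintype n]

def entrywiseL1Norm (A : Matrix m n 𝕜) : ℝ :=
  ∑ i, ∑ j, ‖A i j‖

theorem trace_conjTranspose_mul_self_eq_sum_sq_norm (A : Matrix m n 𝕜) :
    (Aᴴ * A).trace = ((∑ i, ∑ j, ‖A i j‖ ^ 2 : ℝ) : 𝕜) := by
  simp only [trace, diag_apply, mul_apply, conjTranspose_apply, RCLike.star_def, RCLike.conj_mul]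
  push_cast
  exact sum_comm

theorem entrywiseL1Norm_le_sqrt_card_mul_sqrt_sum_sq_norm (A : Matrix m n 𝕜) :
    A.entrywiseL1Norm ≤ √(Fintype.card m * Fintype.card n) * √(∑ i, ∑ j, ‖A i j‖ ^ 2) := by
  rw [entrywiseL1Norm, ← Real.sqrt_mul (by positivity),
    Real.le_sqrt (by positivity) (by positivity)]
  simpa only [Fintype.sum_prod_type, card_univ, Fintype.card_prod, Nat.cast_mul] using
    sq_sum_le_card_mul_sum_sq (s := (univ : Finset (m × n))) (f := fun p => ‖A p.1 p.2‖)

end Matrix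

theorem sqrt_sum_sq_norm_le_nuclearNorm {n m : ℕ} (A : Matrix (Fin n) (Fin m) ℂ) :
    √(∑ i, ∑ j, ‖A i j‖ ^ 2) ≤ nuclearNorm A := by
  have hA := isHermitian_conjTranspose_mul_self A
  have hsum : ∑ j, hA.eigenvalues j = ∑ i, ∑ j, ‖A i j‖ ^ 2 := by
    exact_mod_cast hA.trace_eq_sum_eigenvalues.symm.trans
      (trace_conjTranspose_mul_self_eq_sum_sq_norm A)
  rw [← hsum]
  exact Real.sqrt_sum_le_sum_sqrt _ fun j _ => eigenvalues_conjTranspose_mul_self_nonneg A j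

theorem one_div_mul_entrywiseL1Norm_le_nuclearNorm {N : ℕ} (M : Matrix (Fin N) (Fin N) ℂ) :
    1 / (N : ℝ) * M.entrywiseL1Norm ≤ nuclearNorm M := by
  rcases Nat.eq_zero_or_pos N with rfl | hN
  · simp [nuclearNorm]
  have hl1 := M.entrywiseL1Norm_le_sqrt_card_mul_sqrt_sum_sq_norm
  rw [Fintype.card_fin, Real.sqrt_mul_self (Nat.cast_nonneg N)] at hl1
  rw [one_div_mul_eq_div, div_le_iff₀' (by positivity)]
  exact hl1.trans (by gcongr; exact sqrt_sum_sq_norm_le_nuclearNorm M)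

theorem sum_entrywiseL1Norm_diagonal_mul_cycSub_mul_diagonal {n m : ℕ}
    (R : Matrix (Fin n) (Fin m) ℂ) (d : Fin n → ℂ) :
    ∑ k, (diagonal d * cycSub R k * diagonal d).entrywiseL1Norm
      = (∑ i, ‖d i‖ * ∑ t, ‖R i t‖) * ∑ j, ‖d j‖ := by
  simp only [entrywiseL1Norm, mul_diagonal, diagonal_mul, cycSub, of_apply, norm_mul]
  rw [sum_comm, sum_mul_sum]
  refine sum_congr rfl fun i _ => ?_
  rw [sum_comm]
  refine sum_congr rfl fun j _ => ?_
  rw [← sum_mul, ← mul_sum, Fin.sum_mod_add_shift j fun t => ‖R i t‖]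

theorem sq_sum_le_sum_entrywiseL1Norm_diagonal_mul_cycSub_mul_diagonal {n m : ℕ}
    (R : Matrix (Fin n) (Fin m) ℂ) (hrows : ∀ i, ∑ j, ‖R i j‖ ^ 2 = 1) (σ : Fin n → ℝ) :
    (∑ i, σ i) ^ 2 ≤ ∑ k, (diagonal (fun i => (σ i : ℂ)) * cycSub R k
      * diagonal (fun i => (σ i : ℂ))).entrywiseL1Norm := by
  rw [sum_entrywiseL1Norm_diagonal_mul_cycSub_mul_diagonal]
  simp only [Complex.norm_real, Real.norm_eq_abs]
  obtain ⟨hlower, hupper⟩ := abs_le.mp (abs_sum_le_sum_abs σ univ)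
  calc (∑ i, σ i) ^ 2 ≤ (∑ i, |σ i|) ^ 2 := sq_le_sq' hlower hupper
    _ = (∑ i, |σ i| * 1) * ∑ j, |σ j| := by simp only [mul_one, sq]
    _ ≤ (∑ i, |σ i| * ∑ t, ‖R i t‖) * ∑ j, |σ j| := by
        gcongr with i
        exact one_le_sum_norm_of_sum_sq_norm_eq_one (hrows i)

theorem stmt17_general {n m : ℕ} (R : Matrix (Fin n) (Fin m) ℂ)
    (hrows : ∀ i, ∑ j, ‖R i j‖ ^ 2 = 1)
    (σ : Fin n → ℝ) :
    (1 / (n : ℝ)) * (∑ i, σ i) ^ 2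
      ≤ ∑ k : Fin m,
          nuclearNorm (Matrix.diagonal (fun i => (σ i : ℂ)) * cycSub R k
            * Matrix.diagonal (fun i => (σ i : ℂ))) := by
  calc (1 / (n : ℝ)) * (∑ i, σ i) ^ 2
      ≤ 1 / (n : ℝ) * ∑ k, (diagonal (fun i => (σ i : ℂ)) * cycSub R k
          * diagonal (fun i => (σ i : ℂ))).entrywiseL1Norm := by
        gcongr
        exact sq_sum_le_sum_entrywiseL1Norm_diagonal_mul_cycSub_mul_diagonal R hrows σ
    _ ≤ _ := by
        rw [mul_sum]
        exact sum_le_sum fun k _ => one_div_mul_entrywiseL1Norm_le_nuclearNorm _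

/-- For an `n×m` complex matrix `R` (`m ≥ n`) whose rows are unit
vectors, and `D = diag(σ₁,…,σₙ)` with `σᵢ ≥ 0`,
`Σₖ ‖D B(k) D‖_* ≥ (1/n)(Σₖ σₖ)²`. -/
theorem stmt17 {n m : ℕ} (R : Matrix (Fin n) (Fin m) ℂ) (hnm : n ≤ m)
    (hrows : ∀ i, ∑ j, ‖R i j‖ ^ 2 = 1)
    (σ : Fin n → ℝ) (hσ : ∀ i, 0 ≤ σ i) :
    (1 / (n : ℝ)) * (∑ i, σ i) ^ 2
      ≤ ∑ k : Fin m,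
          nuclearNorm (Matrix.diagonal (fun i => (σ i : ℂ)) * cycSub R k
            * Matrix.diagonal (fun i => (σ i : ℂ))) :=
  stmt17_general R hrows σ
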